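/- arXiv:2409.20172 — 4 statements merged into one kernel-verified Lean document; each statement's English description precedes it below -/
import Mathlib

section
/- Let H be a hypergraph, let A, B ⊆ V(H), and let x : V(H) → [0,1] be a fractional (A,B)-separator in H. For each v ∈ V(H) let d_v ∈ [0,∞] be the infimum over all paths P in H from a vertex of A to v of ∑_{w ∈ V(P)} x(w) (d_v = ∞ if no such path exists). Then for every r ∈ [0,1], the set S_r = {v ∈ V(H) : x(v) > 0 and d_v − x(v) ≤ r ≤ d_v} is an (A,B)-separator in H and S_r ⊆ supp(x). -/
/-! Write `d` for the least `x`-weight of a path from `A`. Along an edge `u c` we have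
`d c ≤ d u + x c`, while `d ≤ x` on `A` and `d ≥ 1 ≥ r` on `B`. Hence the property
`d v - x v < r ∨ d v ≤ x v` holds at the start of any path from `A` to `B`, and it passes from a
vertex `u` to its successor unless `r ≤ d u ≠ 0`, in which case `u ∈ S_r`; at the end of the path
it forces the last vertex into `S_r`. -/

open Finset
open scoped ENNReal

/-- A hypergraph: a finite vertex set, a finite set of nonempty hyperedges covering
all vertices. -/
structure Hypergraph' (α : Type*) where
  V : Finset α
  E : Finset (Finset α)
  edge_sub : ∀ e ∈ E, e ⊆ V
  edge_nonempty : ∀ e ∈ E, e.Nonempty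
  no_isolated : ∀ v ∈ V, ∃ e ∈ E, v ∈ e

/-- Degeneracy of a graph restricted to a finite vertex set `W`: the least `d` such that
every nonempty subset has a vertex with at most `d` neighbours inside the subset. -/
noncomputable def degeneracyOn {β : Type*} (G : SimpleGraph β) (W : Finset β) : ℕ :=
  sInf {d : ℕ | ∀ W' ⊆ W, W'.Nonempty → ∃ v ∈ W', ((W' : Set β) ∩ G.neighborSet v).ncard ≤ d}

namespace Hypergraph'

variable {α : Type*}

/-- The primal (Gaifman) graph of a hypergraph. -/
def primal (H : Hypergraph' α) : SimpleGraph α where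
  Adj u v := u ≠ v ∧ ∃ e ∈ H.E, u ∈ e ∧ v ∈ e
  symm := by
    constructor
    rintro u v ⟨hne, e, he, hu, hv⟩
    exact ⟨hne.symm, e, he, hv, hu⟩
  loopless := by
    constructor
    rintro u ⟨hne, -⟩
    exact hne rfl

/-- `S` is an `(A,B)`-separator in `H`: every path of the primal graph from a vertex
of `A` to a vertex of `B` meets `S`. -/
def IsSeparator (H : Hypergraph' α) (A B S : Finset α) : Prop :=
  ∀ a ∈ A, ∀ b ∈ B, ∀ p : H.primal.Walk a b, p.IsPath → ∃ v ∈ p.support, v ∈ S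

/-- `x` is a fractional `(A,B)`-separator in `H`. -/
def IsFracSeparator [DecidableEq α] (H : Hypergraph' α) (A B : Finset α) (x : α → ℝ) : Prop :=
  ∀ a ∈ A, ∀ b ∈ B, ∀ p : H.primal.Walk a b, p.IsPath →
    1 ≤ ∑ w ∈ p.support.toFinset, x w

/-- Fractional edge cover number of a weight function `x` on vertices. -/
noncomputable def fracCover [DecidableEq α] (H : Hypergraph' α) (x : α → ℝ) : ℝ :=
  sInf {c : ℝ | ∃ y : Finset α → ℝ, (∀ e, 0 ≤ y e ∧ y e ≤ 1) ∧
    (∀ v ∈ H.V, x v ≤ ∑ e ∈ H.E, if v ∈ e then y e else 0) ∧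
    c = ∑ e ∈ H.E, y e}

/-- Fractional edge cover number `ρ*_H(S)` of a vertex set. -/
noncomputable def fracCoverSet [DecidableEq α] (H : Hypergraph' α) (S : Finset α) : ℝ :=
  H.fracCover (fun v => if v ∈ S then 1 else 0)

/-- Fractional `E`-edge cover number of `x` (`∞` if no fractional `E`-edge cover exists). -/
noncomputable def fracCoverE [DecidableEq α] (H : Hypergraph' α) (E : Finset (Finset α))
    (x : α → ℝ) : ℝ≥0∞ :=
  sInf {c : ℝ≥0∞ | ∃ y : Finset α → ℝ, (∀ e, 0 ≤ y e ∧ y e ≤ 1) ∧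
    (∀ v ∈ H.V, x v ≤ ∑ e ∈ E, if v ∈ e then y e else 0) ∧
    c = ENNReal.ofReal (∑ e ∈ E, y e)}

/-- Fractional `E`-edge cover number `ρ*_{H,E}(S)` of a vertex set. -/
noncomputable def fracCoverESet [DecidableEq α] (H : Hypergraph' α) (E : Finset (Finset α))
    (S : Finset α) : ℝ≥0∞ :=
  H.fracCoverE E (fun v => if v ∈ S then 1 else 0)

/-- Integral edge cover number `ρ_H(S)`. -/
noncomputable def intCover [DecidableEq α] (H : Hypergraph' α) (S : Finset α) : ℕ :=
  sInf {n : ℕ | ∃ F ⊆ H.E, S ⊆ F.biUnion id ∧ F.card = n}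

/-- Independence number `α_H(R)`: maximum size of a subset of `R` such that no
hyperedge contains two of its vertices. -/
noncomputable def indepNum [DecidableEq α] (H : Hypergraph' α) (R : Finset α) : ℕ :=
  sSup {n : ℕ | ∃ I ⊆ R, (∀ e ∈ H.E, (I ∩ e).card ≤ 1) ∧ I.card = n}

/-- Maximum intersection size `η_H` of two distinct hyperedges. -/
noncomputable def eta [DecidableEq α] (H : Hypergraph' α) : ℕ :=
  sSup {n : ℕ | ∃ e₁ ∈ H.E, ∃ e₂ ∈ H.E, e₁ ≠ e₂ ∧ n = (e₁ ∩ e₂).card}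

/-- The (bipartite) incidence graph of a hypergraph. -/
def incidence (H : Hypergraph' α) : SimpleGraph (α ⊕ Finset α) where
  Adj p q :=
    (∃ v e, p = Sum.inl v ∧ q = Sum.inr e ∧ e ∈ H.E ∧ v ∈ e) ∨
    (∃ v e, p = Sum.inr e ∧ q = Sum.inl v ∧ e ∈ H.E ∧ v ∈ e)
  symm := by
    constructor
    rintro p q (⟨v, e, rfl, rfl, he, hv⟩ | ⟨v, e, rfl, rfl, he, hv⟩)
    · exact Or.inr ⟨v, e, rfl, rfl, he, hv⟩
    · exact Or.inl ⟨v, e, rfl, rfl, he, hv⟩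
  loopless := by
    constructor
    rintro p (⟨v, e, rfl, h, -, -⟩ | ⟨v, e, rfl, h, -, -⟩) <;> exact absurd h (by simp)

/-- `μ_H`: degeneracy of the incidence graph of `H`. -/
noncomputable def mu [DecidableEq α] (H : Hypergraph' α) : ℕ :=
  degeneracyOn H.incidence (H.V.image Sum.inl ∪ H.E.image Sum.inr)

/-- `γ(P) = ∑_{e ∈ E(H) : e ∩ P ≠ ∅} γ(e)`. -/
noncomputable def edgeWeight [DecidableEq α] (H : Hypergraph' α) (γ : Finset α → ℝ)
    (P : Finset α) : ℝ :=
  ∑ e ∈ H.E, if (e ∩ P).Nonempty then γ e else 0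

/-- `u` can reach `v` by a walk of the primal graph avoiding `S`. -/
def ReachOutside (H : Hypergraph' α) (S : Finset α) (u v : α) : Prop :=
  ∃ p : H.primal.Walk u v, ∀ w ∈ p.support, w ∉ S

/-- The connected component of `v` in the primal graph of `H` after deleting `S`. -/
noncomputable def comp (H : Hypergraph' α) (S : Finset α) (v : α) : Finset α := by
  classical exact H.V.filter (fun u => H.ReachOutside S v u)

/-- `S` is a `(γ,φ)`-balanced separator in `H`. -/
def IsGammaBalSep [DecidableEq α] (H : Hypergraph' α) (γ : Finset α → ℝ) (φ : ℝ)
    (S : Finset α) : Prop :=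
  ∀ v ∈ H.V, v ∉ S → H.edgeWeight γ (H.comp S v) ≤ φ * H.edgeWeight γ H.V

/-- `S` is a `(Z,φ)`-balanced separator in `H`. -/
def IsZBalSep [DecidableEq α] (H : Hypergraph' α) (Z : Finset α) (φ : ℝ)
    (S : Finset α) : Prop :=
  ∀ v ∈ H.V, v ∉ S →
    H.fracCoverSet (H.comp S v ∩ Z) ≤ φ * H.fracCoverSet Z

/-- `dist*_{H,x}(u,v)`: the minimum of `1` and the minimum total `x`-weight of a path
from `u` to `v` in the primal graph. -/
noncomputable def dist1 [DecidableEq α] (H : Hypergraph' α) (x : α → ℝ) (u v : α) : ℝ :=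
  sInf ({1} ∪ {c : ℝ | ∃ p : H.primal.Walk u v, p.IsPath ∧ c = ∑ w ∈ p.support.toFinset, x w})

/-- `dist*_{H,x}(e,e') = min_{u ∈ e, v ∈ e'} dist*_{H,x}(u,v)`. -/
noncomputable def distE [DecidableEq α] (H : Hypergraph' α) (x : α → ℝ)
    (e e' : Finset α) : ℝ :=
  sInf {c : ℝ | ∃ u ∈ e, ∃ v ∈ e', c = H.dist1 x u v}

/-- `x` is a fractional `(γ,φ)`-balanced separator in `H`. -/
def IsFracGammaBalSep [DecidableEq α] (H : Hypergraph' α) (γ : Finset α → ℝ) (φ : ℝ)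
    (x : α → ℝ) : Prop :=
  ∀ e ∈ H.E, (1 - φ) * (∑ e' ∈ H.E, γ e') ≤ ∑ e' ∈ H.E, H.distE x e e' * γ e'

/-- The induced subhypergraph `H[Q]` for `Q ⊆ V(H)`. -/
def induce [DecidableEq α] (H : Hypergraph' α) (Q : Finset α) (hQ : Q ⊆ H.V) :
    Hypergraph' α where
  V := Q
  E := (H.E.image (fun e => e ∩ Q)).filter (fun e => e.Nonempty)
  edge_sub := by
    intro e he
    simp only [mem_filter, mem_image] at he
    obtain ⟨⟨e', -, rfl⟩, -⟩ := he
    exact inter_subset_right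
  edge_nonempty := by
    intro e he
    exact (mem_filter.mp he).2
  no_isolated := by
    intro v hv
    obtain ⟨e, he, hve⟩ := H.no_isolated v (hQ hv)
    exact ⟨e ∩ Q, mem_filter.mpr ⟨mem_image.mpr ⟨e, he, rfl⟩,
      ⟨v, mem_inter.mpr ⟨hve, hv⟩⟩⟩, mem_inter.mpr ⟨hve, hv⟩⟩

/-- The ball `B^Q_c(r)` of radius `r` around `c` in `H[Q]` with respect to `x`. -/
noncomputable def ball [DecidableEq α] (H : Hypergraph' α) (x : α → ℝ) (Q : Finset α)
    (hQ : Q ⊆ H.V) (c : α) (r : ℝ) : Finset α := by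
  classical exact Q.filter (fun v => (H.induce Q hQ).dist1 x c v ≤ r)

end Hypergraph'

/-- A tree decomposition of a hypergraph. -/
structure TreeDecomp {α : Type*} (H : Hypergraph' α) where
  ι : Type
  fintype : Fintype ι
  T : SimpleGraph ι
  isTree : T.IsTree
  bag : ι → Finset α
  bag_sub : ∀ t, bag t ⊆ H.V
  bag_conn : ∀ v ∈ H.V, (SimpleGraph.induce {t | v ∈ bag t} T).Connected
  edge_bag : ∀ e ∈ H.E, ∃ t, e ⊆ bag t

namespace SimpleGraph

variable {β : Type*} {G : SimpleGraph β}

theorem Walk.exists_mem_support_of_forall_adj {P T : β → Prop} {a b : β} (p : G.Walk a b)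
    (hstep : ∀ u c, G.Adj u c → P u → ¬T u → P c) (ha : P a) (hb : P b → T b) :
    ∃ v ∈ p.support, T v := by
  by_contra! hT
  obtain ⟨e, he, ⟨hP, hTe⟩, hout⟩ := p.exists_boundary_dart {u | P u ∧ ¬T u}
    ⟨ha, hT a p.start_mem_support⟩ fun ⟨hPb, hTb⟩ => hTb (hb hPb)
  exact hout ⟨hstep _ _ e.adj hP hTe, hT _ (p.dart_snd_mem_support_of_mem_darts he)⟩

variable [DecidableEq β]

/-- `⊤` when no path from `A` reaches `v`. -/
noncomputable def weightedDistFrom (G : SimpleGraph β) (A : Set β) (x : β → ℝ) (v : β) : ℝ≥0∞ :=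
  sInf {c : ℝ≥0∞ | ∃ a ∈ A, ∃ p : G.Walk a v, p.IsPath ∧
    c = ENNReal.ofReal (∑ w ∈ p.support.toFinset, x w)}

variable {A : Set β} {x : β → ℝ}

theorem weightedDistFrom_le_of_walk (hx : ∀ v, 0 ≤ x v) {a v : β} (ha : a ∈ A) (p : G.Walk a v) :
    G.weightedDistFrom A x v ≤ ENNReal.ofReal (∑ w ∈ p.support.toFinset, x w) :=
  calc G.weightedDistFrom A x v
      ≤ ENNReal.ofReal (∑ w ∈ p.bypass.support.toFinset, x w) :=
        sInf_le ⟨a, ha, p.bypass, p.bypass_isPath, rfl⟩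
    _ ≤ _ := ENNReal.ofReal_le_ofReal <| sum_le_sum_of_subset_of_nonneg
        (fun _ hw => List.mem_toFinset.2 <| p.support_bypass_subset_support <| List.mem_toFinset.1 hw)
        fun w _ _ => hx w

theorem weightedDistFrom_le_of_mem (hx : ∀ v, 0 ≤ x v) {a : β} (ha : a ∈ A) :
    G.weightedDistFrom A x a ≤ ENNReal.ofReal (x a) := by
  simpa using weightedDistFrom_le_of_walk hx ha (Walk.nil : G.Walk a a)

theorem le_weightedDistFrom {t : ℝ} {b : β}
    (h : ∀ a ∈ A, ∀ p : G.Walk a b, p.IsPath → t ≤ ∑ w ∈ p.support.toFinset, x w) :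
    ENNReal.ofReal t ≤ G.weightedDistFrom A x b :=
  le_sInf <| by
    rintro _ ⟨a, ha, p, hp, rfl⟩
    exact ENNReal.ofReal_le_ofReal (h a ha p hp)

theorem weightedDistFrom_le_add_of_adj (hx : ∀ v, 0 ≤ x v) {u c : β} (huc : G.Adj u c) :
    G.weightedDistFrom A x c ≤ G.weightedDistFrom A x u + ENNReal.ofReal (x c) := by
  rw [← tsub_le_iff_right]
  refine le_sInf ?_
  rintro _ ⟨a, ha, p, -, rfl⟩
  have hsum : ∑ w ∈ (p.concat huc).support.toFinset, x w ≤ ∑ w ∈ p.support.toFinset, x w + x c := by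
    have hsupp : (p.concat huc).support.toFinset = insert c p.support.toFinset := by
      ext; simp [Walk.support_concat]
    rw [hsupp]
    by_cases hc : c ∈ p.support.toFinset
    · rw [insert_eq_of_mem hc]
      exact le_add_of_nonneg_right (hx c)
    · rw [sum_insert hc, add_comm]
  rw [tsub_le_iff_right, ← ENNReal.ofReal_add (sum_nonneg fun w _ => hx w) (hx c)]
  exact (weightedDistFrom_le_of_walk hx ha _).trans (ENNReal.ofReal_le_ofReal hsum)

theorem Walk.exists_mem_support_crossing_level (hx : ∀ v, 0 ≤ x v) {ρ : ℝ≥0∞} {a b : β}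
    (p : G.Walk a b) (ha : a ∈ A) (hρ : ρ ≤ G.weightedDistFrom A x b)
    (hb : G.weightedDistFrom A x b ≠ 0) :
    ∃ v ∈ p.support, 0 < x v ∧ G.weightedDistFrom A x v - ENNReal.ofReal (x v) ≤ ρ ∧
      ρ ≤ G.weightedDistFrom A x v := by
  set d := G.weightedDistFrom A x
  have hcross : ∀ v, d v - ENNReal.ofReal (x v) < ρ ∨ d v ≤ ENNReal.ofReal (x v) → ρ ≤ d v →
      d v ≠ 0 → 0 < x v ∧ d v - ENNReal.ofReal (x v) ≤ ρ ∧ ρ ≤ d v := by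
    intro v hv hρv hv0
    refine ⟨?_, hv.elim le_of_lt fun h => (tsub_eq_zero_of_le h).trans_le zero_le, hρv⟩
    by_contra! hxv
    rw [ENNReal.ofReal_of_nonpos hxv, tsub_zero] at hv
    exact hv.elim (fun h => h.not_ge hρv) fun h => hv0 (nonpos_iff_eq_zero.1 h)
  refine p.exists_mem_support_of_forall_adj
    (P := fun v => d v - ENNReal.ofReal (x v) < ρ ∨ d v ≤ ENNReal.ofReal (x v)) ?_
    (Or.inr (weightedDistFrom_le_of_mem hx ha)) fun hb' => hcross b hb' hρ hb
  intro u c huc hu hcu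
  have hdc : d c ≤ d u + ENNReal.ofReal (x c) := weightedDistFrom_le_add_of_adj hx huc
  rcases lt_or_ge (d u) ρ with hρu | hρu
  · exact Or.inl ((tsub_le_iff_right.2 hdc).trans_lt hρu)
  · have hu0 : d u = 0 := by
      by_contra hu0
      exact hcu (hcross u hu hρu hu0)
    exact Or.inr (by simpa [hu0] using hdc)

end SimpleGraph

theorem level_set_is_separator_general {α : Type*} [DecidableEq α] (H : Hypergraph' α)
    (A B : Finset α)
    (x : α → ℝ) (hx01 : ∀ v, 0 ≤ x v ∧ x v ≤ 1) (hxV : ∀ v ∉ H.V, x v = 0)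
    (hsep : H.IsFracSeparator A B x)
    (d : α → ℝ≥0∞)
    (hd : ∀ v, d v = sInf {c : ℝ≥0∞ | ∃ a ∈ A, ∃ p : H.primal.Walk a v, p.IsPath ∧
      c = ENNReal.ofReal (∑ w ∈ p.support.toFinset, x w)})
    (r : ℝ) (hr1 : r ≤ 1)
    (S : Finset α)
    (hSdef : ∀ v, v ∈ S ↔ v ∈ H.V ∧ 0 < x v ∧
      d v - ENNReal.ofReal (x v) ≤ ENNReal.ofReal r ∧ ENNReal.ofReal r ≤ d v) :
    H.IsSeparator A B S ∧ ∀ v ∈ S, v ∈ H.V ∧ 0 < x v := by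
  have hx : ∀ v, 0 ≤ x v := fun v => (hx01 v).1
  obtain rfl : d = H.primal.weightedDistFrom A x := funext hd
  refine ⟨fun a ha b hb p _ => ?_, fun v hv => ⟨((hSdef v).1 hv).1, ((hSdef v).1 hv).2.1⟩⟩
  have hdb : 1 ≤ H.primal.weightedDistFrom A x b := by
    simpa using H.primal.le_weightedDistFrom fun a' ha' => hsep a' ha' b hb
  obtain ⟨v, hv, hxv, hle, hge⟩ := p.exists_mem_support_crossing_level hx ha
    ((ENNReal.ofReal_le_one.2 hr1).trans hdb) (one_pos.trans_le hdb).ne'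
  refine ⟨v, hv, (hSdef v).2 ⟨?_, hxv, hle, hge⟩⟩
  by_contra hvV
  exact hxv.ne' (hxV v hvV)

/-- For every `r ∈ [0,1]`, the level set
`S_r = {v : x(v) > 0, d_v − x(v) ≤ r ≤ d_v}` of a fractional `(A,B)`-separator `x`
is an `(A,B)`-separator contained in `supp(x)`. -/
theorem level_set_is_separator {α : Type*} [DecidableEq α] (H : Hypergraph' α)
    (A B : Finset α) (hA : A ⊆ H.V) (hB : B ⊆ H.V)
    (x : α → ℝ) (hx01 : ∀ v, 0 ≤ x v ∧ x v ≤ 1) (hxV : ∀ v ∉ H.V, x v = 0)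
    (hsep : H.IsFracSeparator A B x)
    (d : α → ℝ≥0∞)
    (hd : ∀ v, d v = sInf {c : ℝ≥0∞ | ∃ a ∈ A, ∃ p : H.primal.Walk a v, p.IsPath ∧
      c = ENNReal.ofReal (∑ w ∈ p.support.toFinset, x w)})
    (r : ℝ) (hr0 : 0 ≤ r) (hr1 : r ≤ 1)
    (S : Finset α)
    (hSdef : ∀ v, v ∈ S ↔ v ∈ H.V ∧ 0 < x v ∧
      d v - ENNReal.ofReal (x v) ≤ ENNReal.ofReal r ∧ ENNReal.ofReal r ≤ d v) :
    H.IsSeparator A B S ∧ ∀ v ∈ S, v ∈ H.V ∧ 0 < x v :=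
  level_set_is_separator_general H A B x hx01 hxV hsep d hd r hr1 S hSdef
end

section
/- Let H be a hypergraph, let A, B ⊆ V(H), let E ⊆ E(H), let x : V(H) → [0,1] be a fractional (A,B)-separator in H with supp(x) = R, and let ε be a real with 0 < ε < 1/(2·α_H(R)). Then there exists a fractional (A,B)-separator x̃ : V(H) → [0,1] in H with supp(x̃) ⊆ R such that x̃(v) ∈ {0} ∪ [ε,1] for all v ∈ V(H), and ρ*_{H,E}(x̃) ≤ ρ*_{H,E}(x)/(1 − 2·ε·α_H(R)). -/
open Finset
open scoped ENNReal

/-!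
Keep the values `x v ≥ ε`, divide them by `c = 1 - 2 ε α_H(R)` (capping at `1`) and drop the
others. Every path from `A` to `B` contains, on its vertices, a chordless path with the same ends.
The vertices of a chordless path at even and at odd positions form two independent sets, so it
meets `R` in at most `2 α_H(R)` vertices and the dropped values on it add up to at most
`2 ε α_H(R) = 1 - c`. The kept values on it thus add up to at least `c`, and to at least `1` after
the division by `c`. A fractional `E`-edge cover `y` of `x` gives the cover `min 1 (y / c)` of the
new function, of weight at most `(∑ y) / c`.
-/

namespace SimpleGraph.Walk

variable {V : Type*} {G : SimpleGraph V} {u v : V}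

lemma exists_shorter_of_adj_getVert (p : G.Walk u v) {i j : ℕ} (hij : i + 2 ≤ j)
    (hj : j ≤ p.length) (hadj : G.Adj (p.getVert i) (p.getVert j)) :
    ∃ q : G.Walk u v, q.length < p.length ∧ q.support ⊆ p.support := by
  refine ⟨(p.take i).append (cons hadj (p.drop j)), ?_, fun w hw => ?_⟩
  · simp only [length_append, take_length, length_cons, drop_length]
    omega
  · rw [mem_support_append_iff, support_cons, List.mem_cons] at hw
    rcases hw with hw | rfl | hw
    · exact (p.isSubwalk_take i).support_subset hw
    · exact (p.isSubwalk_take i).support_subset (p.take i).end_mem_support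
    · exact (p.isSubwalk_drop j).support_subset hw

lemma exists_shorter_of_not_isChordless {p : G.Walk u v} (hp : ¬ p.IsChordless) :
    ∃ q : G.Walk u v, q.length < p.length ∧ q.support ⊆ p.support := by
  obtain ⟨u', v', hu', hv', hadj, hnot⟩ : ∃ u' v', u' ∈ p.support ∧ v' ∈ p.support ∧
      G.Adj u' v' ∧ s(u', v') ∉ p.edges := by
    simpa [isChordless_iff_forall_mem_edges] using hp
  obtain ⟨i, rfl, hi⟩ := mem_support_iff_exists_getVert.mp hu'
  obtain ⟨j, rfl, hj⟩ := mem_support_iff_exists_getVert.mp hv'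
  have hedge : ∀ k < p.length, s(p.getVert k, p.getVert (k + 1)) ∈ p.edges :=
    fun k hk => (mk_mem_edges_iff_exists p).mpr ⟨k, hk, rfl⟩
  rcases lt_trichotomy i j with hlt | rfl | hlt
  · refine p.exists_shorter_of_adj_getVert (i := i) (j := j) ?_ hj hadj
    by_contra! h
    obtain rfl : j = i + 1 := by omega
    exact hnot (hedge i (by omega))
  · exact absurd rfl hadj.ne
  · refine p.exists_shorter_of_adj_getVert (i := j) (j := i) ?_ hi hadj.symm
    by_contra! h
    obtain rfl : i = j + 1 := by omega
    exact hnot (Sym2.eq_swap ▸ hedge j (by omega))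

theorem exists_isPath_isChordless_support_subset [DecidableEq V] (p : G.Walk u v) :
    ∃ q : G.Walk u v, q.IsPath ∧ q.IsChordless ∧ q.support ⊆ p.support := by
  by_cases hc : p.bypass.IsChordless
  · exact ⟨p.bypass, p.bypass_isPath, hc, p.support_bypass_subset_support⟩
  · obtain ⟨r, hr, hrs⟩ := exists_shorter_of_not_isChordless hc
    have : r.length < p.length := hr.trans_le p.length_bypass_le_length
    obtain ⟨q, hq, hqc, hqs⟩ := exists_isPath_isChordless_support_subset r
    exact ⟨q, hq, hqc, fun w hw => p.support_bypass_subset_support (hrs (hqs hw))⟩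
termination_by p.length

lemma IsPath.not_adj_getVert_of_isChordless {p : G.Walk u v} (hp : p.IsPath)
    (hc : p.IsChordless) {i j : ℕ} (hij : i + 2 ≤ j) (hj : j ≤ p.length) :
    ¬ G.Adj (p.getVert i) (p.getVert j) := by
  intro hadj
  obtain ⟨k, hk, hkij⟩ := (mk_mem_edges_iff_exists p).mp
    (hc.mem_edges (p.getVert_mem_support i) (p.getVert_mem_support j) hadj)
  have hinj {m n : ℕ} (hm : m ≤ p.length) (hn : n ≤ p.length)
      (h : p.getVert m = p.getVert n) : m = n := hp.getVert_injOn hm hn h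
  rcases Sym2.eq_iff.mp hkij with ⟨h₁, h₂⟩ | ⟨h₁, h₂⟩
  · have := hinj (by omega) (by omega) h₁; have := hinj (by omega) hj h₂; omega
  · have := hinj (by omega) hj h₁; have := hinj (by omega) (by omega) h₂; omega

lemma IsPath.exists_isIndepSet_cover_of_isChordless {p : G.Walk u v} (hp : p.IsPath)
    (hc : p.IsChordless) :
    ∃ I₀ I₁ : Set V, G.IsIndepSet I₀ ∧ G.IsIndepSet I₁ ∧ {w | w ∈ p.support} ⊆ I₀ ∪ I₁ := by
  let I (r : ℕ) : Set V := {w | ∃ i ≤ p.length, i % 2 = r ∧ p.getVert i = w}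
  have hI : ∀ r, G.IsIndepSet (I r) := by
    rintro r _ ⟨i, hi, hir, rfl⟩ _ ⟨j, hj, hjr, rfl⟩ hne hadj
    rcases lt_trichotomy i j with hlt | rfl | hlt
    · exact hp.not_adj_getVert_of_isChordless hc (by omega) hj hadj
    · exact hne rfl
    · exact hp.not_adj_getVert_of_isChordless hc (by omega) hi hadj.symm
  refine ⟨I 0, I 1, hI 0, hI 1, fun w hw => ?_⟩
  obtain ⟨i, rfl, hi⟩ := mem_support_iff_exists_getVert.mp hw
  rcases Nat.mod_two_eq_zero_or_one i with h | h
  · exact Or.inl ⟨i, hi, h, rfl⟩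
  · exact Or.inr ⟨i, hi, h, rfl⟩

end SimpleGraph.Walk

lemma min_one_sum_le_sum_min_one {ι : Type*} {s : Finset ι} {f : ι → ℝ}
    (hf : ∀ i ∈ s, 0 ≤ f i) : min 1 (∑ i ∈ s, f i) ≤ ∑ i ∈ s, min 1 (f i) := by
  by_cases h : ∃ i ∈ s, 1 ≤ f i
  · obtain ⟨i, hi, h1⟩ := h
    calc min 1 (∑ i ∈ s, f i) ≤ min 1 (f i) := by rw [min_eq_left h1]; exact min_le_left _ _
      _ ≤ ∑ i ∈ s, min 1 (f i) :=
        Finset.single_le_sum (fun j hj => le_min zero_le_one (hf j hj)) hi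
  · push Not at h
    calc min 1 (∑ i ∈ s, f i) ≤ ∑ i ∈ s, f i := min_le_right _ _
      _ = ∑ i ∈ s, min 1 (f i) := Finset.sum_congr rfl fun i hi => (min_eq_right (h i hi).le).symm

noncomputable def thresholdScale {α : Type*} (ε c : ℝ) (x : α → ℝ) (v : α) : ℝ :=
  if ε ≤ x v then min 1 (x v / c) else 0

section thresholdScale

variable {α : Type*} {ε c : ℝ} {x : α → ℝ} {v : α}

lemma thresholdScale_nonneg (hc : 0 ≤ c) (hx : 0 ≤ x v) : 0 ≤ thresholdScale ε c x v := by
  unfold thresholdScale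
  split_ifs
  exacts [le_min zero_le_one (div_nonneg hx hc), le_rfl]

lemma thresholdScale_le_one : thresholdScale ε c x v ≤ 1 := by
  unfold thresholdScale
  split_ifs
  exacts [min_le_left _ _, zero_le_one]

lemma thresholdScale_le_min (hc : 0 ≤ c) (hx : 0 ≤ x v) :
    thresholdScale ε c x v ≤ min 1 (x v / c) := by
  unfold thresholdScale
  split_ifs
  exacts [le_rfl, le_min zero_le_one (div_nonneg hx hc)]

lemma le_of_thresholdScale_pos (h : 0 < thresholdScale ε c x v) : ε ≤ x v := by
  unfold thresholdScale at h
  split_ifs at h with hv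
  exacts [hv, (lt_irrefl 0 h).elim]

lemma thresholdScale_eq_zero_or_le (hε : ε ≤ 1) (hc : 0 < c) (hc1 : c ≤ 1) (hx : 0 ≤ x v) :
    thresholdScale ε c x v = 0 ∨ ε ≤ thresholdScale ε c x v := by
  unfold thresholdScale
  split_ifs with hv
  · exact Or.inr (le_min hε (hv.trans (le_div_self hx hc hc1)))
  · exact Or.inl rfl

lemma one_le_sum_thresholdScale {s : Finset α} (hc : 0 < c) (hx : ∀ v ∈ s, 0 ≤ x v)
    (hsum : 1 ≤ ∑ v ∈ s, x v) (hsmall : ∑ v ∈ s with x v < ε, x v ≤ 1 - c) :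
    1 ≤ ∑ v ∈ s, thresholdScale ε c x v := by
  by_cases hcap : ∃ v ∈ s, ε ≤ x v ∧ 1 ≤ x v / c
  · obtain ⟨v, hv, hεv, h1⟩ := hcap
    calc (1 : ℝ) = thresholdScale ε c x v := by simp [thresholdScale, hεv, min_eq_left h1]
      _ ≤ ∑ v ∈ s, thresholdScale ε c x v :=
        Finset.single_le_sum (fun w hw => thresholdScale_nonneg hc.le (hx w hw)) hv
  · push Not at hcap
    have hlarge : ∑ v ∈ s, thresholdScale ε c x v = (∑ v ∈ s with ε ≤ x v, x v) / c := by
      rw [Finset.sum_div, Finset.sum_filter]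
      refine Finset.sum_congr rfl fun v hv => ?_
      unfold thresholdScale
      split_ifs with hεv
      exacts [min_eq_right (hcap v hv hεv).le, rfl]
    have hsplit := Finset.sum_filter_add_sum_filter_not s (fun v => ε ≤ x v) x
    simp only [not_le] at hsplit
    rw [hlarge, one_le_div hc]
    linarith

end thresholdScale

namespace Hypergraph'

variable {α : Type*} [DecidableEq α] {H : Hypergraph' α}

lemma card_le_indepNum {R I : Finset α} (hIR : I ⊆ R) (hI : H.primal.IsIndepSet I) :
    I.card ≤ H.indepNum R := by
  refine le_csSup ⟨R.card, ?_⟩ ⟨I, hIR, fun e he => ?_, rfl⟩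
  · rintro n ⟨J, hJR, -, rfl⟩
    exact Finset.card_le_card hJR
  · refine Finset.card_le_one.mpr fun u hu w hw => ?_
    by_contra hne
    rw [Finset.mem_inter] at hu hw
    exact hI hu.1 hw.1 hne ⟨hne, e, he, hu.2, hw.2⟩

lemma card_le_two_mul_indepNum {a b : α} {p : H.primal.Walk a b} (hp : p.IsPath)
    (hc : p.IsChordless) {R T : Finset α} (hTR : T ⊆ R) (hTp : ∀ v ∈ T, v ∈ p.support) :
    T.card ≤ 2 * H.indepNum R := by
  classical
  obtain ⟨I₀, I₁, hI₀, hI₁, hcover⟩ := hp.exists_isIndepSet_cover_of_isChordless hc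
  have hpart (I : Set α) (hI : H.primal.IsIndepSet I) : (T.filter (· ∈ I)).card ≤ H.indepNum R :=
    card_le_indepNum ((Finset.filter_subset _ T).trans hTR)
      (hI.mono fun v hv => (Finset.mem_filter.mp hv).2)
  have hT : T ⊆ T.filter (· ∈ I₀) ∪ T.filter (· ∈ I₁) := fun v hv => by
    rcases hcover (hTp v hv) with h | h
    exacts [Finset.mem_union_left _ (Finset.mem_filter.mpr ⟨hv, h⟩),
      Finset.mem_union_right _ (Finset.mem_filter.mpr ⟨hv, h⟩)]
  have := (Finset.card_le_card hT).trans (Finset.card_union_le _ _)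
  have := hpart I₀ hI₀
  have := hpart I₁ hI₁
  omega

lemma sum_lt_le_two_mul_indepNum {a b : α} {p : H.primal.Walk a b} (hp : p.IsPath)
    (hc : p.IsChordless) {R : Finset α} {x : α → ℝ}
    (hxR : ∀ v, 0 < x v → v ∈ R) {ε : ℝ} (hε : 0 ≤ ε) :
    ∑ v ∈ p.support.toFinset with x v < ε, x v ≤ 2 * H.indepNum R * ε := by
  set S := {v ∈ p.support.toFinset | x v < ε}
  have hcard : ((S.filter (0 < x ·)).card : ℝ) ≤ 2 * H.indepNum R := by
    exact_mod_cast card_le_two_mul_indepNum hp hc (fun v hv => hxR v (Finset.mem_filter.mp hv).2)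
      fun v hv => List.mem_toFinset.mp (Finset.mem_filter.mp (Finset.mem_filter.mp hv).1).1
  calc ∑ v ∈ S, x v ≤ ∑ v ∈ S, if 0 < x v then ε else 0 := by
        refine Finset.sum_le_sum fun v hv => ?_
        split_ifs with hpos
        exacts [(Finset.mem_filter.mp hv).2.le, not_lt.mp hpos]
    _ = (S.filter (0 < x ·)).card * ε := by
        rw [← Finset.sum_filter, Finset.sum_const, nsmul_eq_mul]
    _ ≤ 2 * H.indepNum R * ε := mul_le_mul_of_nonneg_right hcard hε

lemma IsFracSeparator.thresholdScale {A B R : Finset α} {x : α → ℝ} (hsep : H.IsFracSeparator A B x)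
    (hx : ∀ v, 0 ≤ x v) (hxR : ∀ v, 0 < x v → v ∈ R) {ε c : ℝ} (hε : 0 ≤ ε) (hc : 0 < c)
    (hcε : c ≤ 1 - 2 * ε * H.indepNum R) :
    H.IsFracSeparator A B (thresholdScale ε c x) := by
  intro a ha b hb p _
  obtain ⟨q, hq, hqc, hqp⟩ := p.exists_isPath_isChordless_support_subset
  have hsmall := sum_lt_le_two_mul_indepNum hq hqc hxR hε
  calc (1 : ℝ) ≤ ∑ v ∈ q.support.toFinset, _root_.thresholdScale ε c x v :=
        one_le_sum_thresholdScale hc (fun v _ => hx v) (hsep a ha b hb q hq) (by linarith)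
    _ ≤ ∑ v ∈ p.support.toFinset, _root_.thresholdScale ε c x v :=
        Finset.sum_le_sum_of_subset_of_nonneg
          (fun v hv => List.mem_toFinset.mpr (hqp (List.mem_toFinset.mp hv)))
          fun v _ _ => thresholdScale_nonneg hc.le (hx v)

lemma fracCoverE_le_div {E : Finset (Finset α)} {x x' : α → ℝ} {c : ℝ} (hc : 0 < c)
    (hx' : ∀ v, x' v ≤ min 1 (x v / c)) :
    H.fracCoverE E x' ≤ H.fracCoverE E x / ENNReal.ofReal c := by
  rw [fracCoverE, fracCoverE, ENNReal.le_div_iff_mul_le (Or.inl (by simpa using hc))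
    (Or.inl ENNReal.ofReal_ne_top)]
  refine le_sInf ?_
  rintro _ ⟨y, hy, hcover, rfl⟩
  refine ENNReal.mul_le_of_le_div ?_
  rw [← ENNReal.ofReal_div_of_pos hc]
  refine sInf_le_of_le ⟨fun e => min 1 (y e / c),
    fun e => ⟨le_min zero_le_one (div_nonneg (hy e).1 hc.le), min_le_left _ _⟩, ?_, rfl⟩ ?_
  · intro v hv
    have hterm : ∀ e ∈ E, 0 ≤ (if v ∈ e then y e else 0) / c := fun e _ => by
      split_ifs
      exacts [div_nonneg (hy e).1 hc.le, by simp]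
    calc x' v ≤ min 1 ((∑ e ∈ E, if v ∈ e then y e else 0) / c) :=
          (hx' v).trans (min_le_min_left 1 (div_le_div_of_nonneg_right (hcover v hv) hc.le))
      _ ≤ ∑ e ∈ E, min 1 ((if v ∈ e then y e else 0) / c) := by
          rw [Finset.sum_div]; exact min_one_sum_le_sum_min_one hterm
      _ = ∑ e ∈ E, if v ∈ e then min 1 (y e / c) else 0 := by
          refine Finset.sum_congr rfl fun e _ => ?_
          split_ifs
          exacts [rfl, by simp]
  · refine ENNReal.ofReal_le_ofReal ?_
    rw [Finset.sum_div]
    exact Finset.sum_le_sum fun e _ => min_le_right _ _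

end Hypergraph'

theorem frac_sep_min_value_general {α : Type*} [DecidableEq α] (H : Hypergraph' α)
    (A B R : Finset α)
    (E : Finset (Finset α))
    (x : α → ℝ) (hx01 : ∀ v, 0 ≤ x v ∧ x v ≤ 1) (hxV : ∀ v ∉ H.V, x v = 0)
    (hsep : H.IsFracSeparator A B x)
    (hR : ∀ v, v ∈ R ↔ v ∈ H.V ∧ 0 < x v)
    (ε : ℝ) (hε0 : 0 < ε) (hε : ε < 1 / (2 * (H.indepNum R : ℝ))) :
    ∃ x' : α → ℝ, (∀ v, 0 ≤ x' v ∧ x' v ≤ 1) ∧ (∀ v ∉ H.V, x' v = 0) ∧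
      H.IsFracSeparator A B x' ∧
      (∀ v, 0 < x' v → v ∈ R) ∧
      (∀ v ∈ H.V, x' v = 0 ∨ ε ≤ x' v) ∧
      H.fracCoverE E x' ≤
        H.fracCoverE E x / ENNReal.ofReal (1 - 2 * ε * (H.indepNum R : ℝ)) := by
  have hα : (1 : ℝ) ≤ H.indepNum R := by
    refine Nat.one_le_cast.mpr (Nat.one_le_iff_ne_zero.mpr fun h => ?_)
    simp only [h, Nat.cast_zero, mul_zero, div_zero] at hε
    linarith
  have hεα : ε * (2 * H.indepNum R) < 1 := (lt_div_iff₀ (by linarith)).mp hε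
  set c := 1 - 2 * ε * (H.indepNum R : ℝ)
  have hc : 0 < c := by linarith
  have hx : ∀ v, 0 ≤ x v := fun v => (hx01 v).1
  have hxR : ∀ v, 0 < x v → v ∈ R := fun v hv =>
    (hR v).mpr ⟨by_contra fun hV => hv.ne' (hxV v hV), hv⟩
  refine ⟨thresholdScale ε c x, fun v => ⟨thresholdScale_nonneg hc.le (hx v),
    thresholdScale_le_one⟩, ?_, hsep.thresholdScale hx hxR hε0.le hc le_rfl, ?_, ?_,
    Hypergraph'.fracCoverE_le_div hc fun v => thresholdScale_le_min hc.le (hx v)⟩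
  · intro v hv
    simp [thresholdScale, hxV v hv]
  · exact fun v hv => hxR v (hε0.trans_le (le_of_thresholdScale_pos hv))
  · exact fun v _ => thresholdScale_eq_zero_or_le (by nlinarith) hc (by nlinarith) (hx v)

/-- A fractional `(A,B)`-separator can be rounded so that all nonzero
values are at least `ε`, increasing the fractional `E`-edge cover number by a factor of
at most `1/(1 − 2·ε·α_H(R))`. -/
theorem frac_sep_min_value {α : Type*} [DecidableEq α] (H : Hypergraph' α)
    (A B R : Finset α) (hA : A ⊆ H.V) (hB : B ⊆ H.V)
    (E : Finset (Finset α)) (hE : E ⊆ H.E)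
    (x : α → ℝ) (hx01 : ∀ v, 0 ≤ x v ∧ x v ≤ 1) (hxV : ∀ v ∉ H.V, x v = 0)
    (hsep : H.IsFracSeparator A B x)
    (hR : ∀ v, v ∈ R ↔ v ∈ H.V ∧ 0 < x v)
    (ε : ℝ) (hε0 : 0 < ε) (hε : ε < 1 / (2 * (H.indepNum R : ℝ))) :
    ∃ x' : α → ℝ, (∀ v, 0 ≤ x' v ∧ x' v ≤ 1) ∧ (∀ v ∉ H.V, x' v = 0) ∧
      H.IsFracSeparator A B x' ∧
      (∀ v, 0 < x' v → v ∈ R) ∧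
      (∀ v ∈ H.V, x' v = 0 ∨ ε ≤ x' v) ∧
      H.fracCoverE E x' ≤
        H.fracCoverE E x / ENNReal.ofReal (1 - 2 * ε * (H.indepNum R : ℝ)) :=
  frac_sep_min_value_general H A B R E x hx01 hxV hsep hR ε hε0 hε
end

section
/- Let H be a hypergraph, let Z ⊆ V(H), let φ ∈ (0,1), and let γ : E(H) → [0,1] be a fractional edge cover of Z with ∑_{e ∈ E(H)} γ(e) = ρ*_H(Z). Then every (γ,φ)-balanced separator in H is also a (Z,φ)-balanced separator in H. -/
open Finset
open scoped ENNReal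

/-!
Restrict `γ` to the hyperedges meeting a component `C`: this still covers `C ∩ Z` and costs
exactly `γ(C)`, so `ρ*(C ∩ Z) ≤ γ(C) ≤ φ γ(V(H)) = φ ∑ γ = φ ρ*(Z)`.
-/

namespace Hypergraph'

variable {α : Type*} [DecidableEq α] (H : Hypergraph' α)

theorem fracCover_le_of_isCover {x : α → ℝ} {y : Finset α → ℝ} (hy : ∀ e, 0 ≤ y e ∧ y e ≤ 1)
    (hcov : ∀ v ∈ H.V, x v ≤ ∑ e ∈ H.E, if v ∈ e then y e else 0) :
    H.fracCover x ≤ ∑ e ∈ H.E, y e :=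
  csInf_le ⟨0, by rintro c ⟨y', hy', -, rfl⟩; exact sum_nonneg fun e _ => (hy' e).1⟩
    ⟨y, hy, hcov, rfl⟩

theorem edgeWeight_V (γ : Finset α → ℝ) : H.edgeWeight γ H.V = ∑ e ∈ H.E, γ e := by
  refine sum_congr rfl fun e he => ?_
  obtain ⟨w, hw⟩ := H.edge_nonempty e he
  rw [if_pos ⟨w, mem_inter.mpr ⟨hw, H.edge_sub e he hw⟩⟩]

theorem fracCoverSet_inter_le_edgeWeight {Z : Finset α} {γ : Finset α → ℝ}
    (hγ01 : ∀ e, 0 ≤ γ e ∧ γ e ≤ 1)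
    (hγcov : ∀ v ∈ Z, 1 ≤ ∑ e ∈ H.E, if v ∈ e then γ e else 0) (P : Finset α) :
    H.fracCoverSet (P ∩ Z) ≤ H.edgeWeight γ P := by
  refine H.fracCover_le_of_isCover (fun e => ?_) fun w _ => ?_
  · split_ifs
    exacts [hγ01 e, ⟨le_rfl, zero_le_one⟩]
  · by_cases hwPZ : w ∈ P ∩ Z
    · obtain ⟨hwP, hwZ⟩ := mem_inter.mp hwPZ
      rw [if_pos hwPZ]
      refine (hγcov w hwZ).trans_eq (sum_congr rfl fun e _ => ?_)
      by_cases hwe : w ∈ e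
      · rw [if_pos hwe, if_pos hwe, if_pos ⟨w, mem_inter.mpr ⟨hwe, hwP⟩⟩]
      · rw [if_neg hwe, if_neg hwe]
    · rw [if_neg hwPZ]
      exact sum_nonneg fun e _ => ite_nonneg (ite_nonneg (hγ01 e).1 le_rfl) le_rfl

end Hypergraph'

theorem gammaBalSep_is_ZBalSep_general {α : Type*} [DecidableEq α] (H : Hypergraph' α)
    (Z : Finset α) (φ : ℝ)
    (γ : Finset α → ℝ) (hγ01 : ∀ e, 0 ≤ γ e ∧ γ e ≤ 1)
    (hγcov : ∀ v ∈ Z, 1 ≤ ∑ e ∈ H.E, if v ∈ e then γ e else 0)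
    (hγcost : ∑ e ∈ H.E, γ e = H.fracCoverSet Z)
    (S : Finset α) (hS : H.IsGammaBalSep γ φ S) :
    H.IsZBalSep Z φ S := fun v hv hvS =>
  calc H.fracCoverSet (H.comp S v ∩ Z)
      ≤ H.edgeWeight γ (H.comp S v) := H.fracCoverSet_inter_le_edgeWeight hγ01 hγcov _
    _ ≤ φ * H.edgeWeight γ H.V := hS v hv hvS
    _ = φ * H.fracCoverSet Z := by rw [H.edgeWeight_V, hγcost]

/-- If `γ` is a minimum-cost fractional edge cover of `Z`, then every
`(γ,φ)`-balanced separator is also a `(Z,φ)`-balanced separator. -/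
theorem gammaBalSep_is_ZBalSep {α : Type*} [DecidableEq α] (H : Hypergraph' α)
    (Z : Finset α) (hZ : Z ⊆ H.V) (φ : ℝ) (hφ0 : 0 < φ) (hφ1 : φ < 1)
    (γ : Finset α → ℝ) (hγ01 : ∀ e, 0 ≤ γ e ∧ γ e ≤ 1)
    (hγcov : ∀ v ∈ Z, 1 ≤ ∑ e ∈ H.E, if v ∈ e then γ e else 0)
    (hγcost : ∑ e ∈ H.E, γ e = H.fracCoverSet Z)
    (S : Finset α) (hS : H.IsGammaBalSep γ φ S) :
    H.IsZBalSep Z φ S :=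
  gammaBalSep_is_ZBalSep_general H Z φ γ hγ01 hγcov hγcost S hS
end

section
/- Let H be a hypergraph, let k ≥ 1 be a real number, and let i, j be positive integers. Suppose ρ*_H(V(H)) ≤ k and H satisfies the i-j intersection property, i.e., every family of i pairwise distinct hyperedges of H has at most j vertices in its common intersection. Then ρ_H(V(H)) ≤ 10·k·i·log₂(2kj). -/
open Finset
open scoped ENNReal

/-!
Take a fractional edge cover `y` of weight `K = k + 1 ≤ 2k` and put `θ = 1/(2i)`. At most `2iK`
edges have `y e ≥ θ`; take them all. A vertex they miss lies in edges of weight `< θ` only, so the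
`i`-th elementary symmetric polynomial of the weights at that vertex is at least
`∏_{ℓ<i} (1 - ℓθ) / i! ≥ 2⁻ⁱ / i!`. Summing over the missed vertices counts each `i`-set of edges
at most `j` times, and `i! e_i(y) ≤ (∑ y)^i ≤ K^i`, so at most `j (2K)^i` vertices are missed.
The greedy algorithm covers those with at most `K ln (j (2K)^i) + 1` further edges.
-/
open scoped Nat

theorem Real.mul_log_add_one_le {K a b : ℝ} (hK : 0 < K) (ha : 0 < a) (hb : 0 ≤ b)
    (hab : a ≤ b * (1 - 1 / K)) : K * Real.log a + 1 ≤ K * Real.log b := by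
  have hexp : a ≤ b * Real.exp (-(1 / K)) :=
    hab.trans (mul_le_mul_of_nonneg_left (by linarith [Real.add_one_le_exp (-(1 / K))]) hb)
  have hb_pos : 0 < b := pos_of_mul_pos_left (ha.trans_le hexp) (Real.exp_pos _).le
  have hlog : Real.log a ≤ Real.log b - 1 / K := by
    simpa [Real.log_mul hb_pos.ne', sub_eq_add_neg] using Real.log_le_log ha hexp
  calc K * Real.log a + 1 ≤ K * (Real.log b - 1 / K) + 1 := by gcongr
    _ = K * Real.log b := by field_simp; ring

namespace Finset

section ElementarySymmetric

variable {β : Type*} [DecidableEq β] (E : Finset β) (z : β → ℝ)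

theorem succ_mul_sum_powersetCard_succ_prod (m : ℕ) :
    ((m + 1 : ℕ) : ℝ) * ∑ F ∈ E.powersetCard (m + 1), ∏ e ∈ F, z e
      = ∑ F ∈ E.powersetCard m, (∏ e ∈ F, z e) * ∑ e ∈ E \ F, z e := by
  have lhs : ((m + 1 : ℕ) : ℝ) * ∑ F ∈ E.powersetCard (m + 1), ∏ e ∈ F, z e
      = ∑ F ∈ E.powersetCard (m + 1), ∑ e ∈ F, (∏ a ∈ F.erase e, z a) * z e := by
    rw [mul_sum]
    refine sum_congr rfl fun F hF => ?_
    rw [sum_congr rfl fun e he => by rw [mul_comm, mul_prod_erase F z he], sum_const,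
      (mem_powersetCard.mp hF).2, nsmul_eq_mul]
  simp_rw [lhs, mul_sum, sum_sigma']
  -- pairs (`(m + 1)`-set, one of its elements) ↔ pairs (`m`-set, an element outside it)
  refine sum_bij' (fun x _ => ⟨x.1.erase x.2, x.2⟩) (fun x _ => ⟨insert x.2 x.1, x.2⟩)
    ?_ ?_ ?_ ?_ (fun _ _ => rfl)
  · rintro ⟨G, e⟩ hx
    simp only [mem_sigma, mem_powersetCard] at hx ⊢
    obtain ⟨⟨hGE, hcard⟩, he⟩ := hx
    refine ⟨⟨(erase_subset _ _).trans hGE, ?_⟩, by simp [hGE he]⟩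
    rw [card_erase_of_mem he, hcard, Nat.add_sub_cancel]
  · rintro ⟨F, e⟩ hx
    simp only [mem_sigma, mem_powersetCard, mem_sdiff] at hx ⊢
    obtain ⟨⟨hFE, hcard⟩, heE, heF⟩ := hx
    exact ⟨⟨insert_subset heE hFE, by rw [card_insert_of_notMem heF, hcard]⟩, mem_insert_self _ _⟩
  · rintro ⟨G, e⟩ hx
    simp [insert_erase (mem_sigma.mp hx).2]
  · rintro ⟨F, e⟩ hx
    simp [erase_insert (mem_sdiff.mp (mem_sigma.mp hx).2).2]

variable {E z}

theorem prod_range_sub_le_factorial_mul_sum_powersetCard_prod {θ : ℝ}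
    (hz0 : ∀ e ∈ E, 0 ≤ z e) (hzθ : ∀ e ∈ E, z e ≤ θ) (m : ℕ)
    (hm : ∀ ℓ < m, ℓ * θ ≤ ∑ e ∈ E, z e) :
    ∏ ℓ ∈ range m, (∑ e ∈ E, z e - ℓ * θ)
      ≤ m ! * ∑ F ∈ E.powersetCard m, ∏ e ∈ F, z e := by
  induction m with
  | zero => simp
  | succ m ih =>
    have hprod_nonneg : ∀ F ∈ E.powersetCard m, 0 ≤ ∏ e ∈ F, z e := fun F hF =>
      prod_nonneg fun e he => hz0 e ((mem_powersetCard.mp hF).1 he)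
    have hrest : ∀ F ∈ E.powersetCard m, ∑ e ∈ E, z e - m * θ ≤ ∑ e ∈ E \ F, z e := by
      intro F hF
      obtain ⟨hFE, hcard⟩ := mem_powersetCard.mp hF
      have hF_le : ∑ e ∈ F, z e ≤ m * θ := by
        simpa [hcard] using sum_le_card_nsmul F z θ fun e he => hzθ e (hFE he)
      rw [sum_sdiff_eq_sub hFE]
      linarith
    calc ∏ ℓ ∈ range (m + 1), (∑ e ∈ E, z e - ℓ * θ)
        = (∏ ℓ ∈ range m, (∑ e ∈ E, z e - ℓ * θ)) * (∑ e ∈ E, z e - m * θ) :=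
          prod_range_succ _ _
      _ ≤ (m ! * ∑ F ∈ E.powersetCard m, ∏ e ∈ F, z e) * (∑ e ∈ E, z e - m * θ) :=
          mul_le_mul_of_nonneg_right (ih fun ℓ hℓ => hm ℓ (hℓ.trans m.lt_succ_self))
            (sub_nonneg.mpr (hm m m.lt_succ_self))
      _ = m ! * ∑ F ∈ E.powersetCard m, (∏ e ∈ F, z e) * (∑ e ∈ E, z e - m * θ) := by
          rw [mul_assoc, sum_mul]
      _ ≤ m ! * ∑ F ∈ E.powersetCard m, (∏ e ∈ F, z e) * ∑ e ∈ E \ F, z e := by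
          gcongr with F hF
          exacts [hprod_nonneg F hF, hrest F hF]
      _ = (m + 1)! * ∑ F ∈ E.powersetCard (m + 1), ∏ e ∈ F, z e := by
          rw [← succ_mul_sum_powersetCard_succ_prod, Nat.factorial_succ]
          push_cast
          ring

theorem factorial_mul_sum_powersetCard_prod_le_pow (hz0 : ∀ e ∈ E, 0 ≤ z e) (m : ℕ) :
    m ! * ∑ F ∈ E.powersetCard m, ∏ e ∈ F, z e ≤ (∑ e ∈ E, z e) ^ m := by
  induction m with
  | zero => simp
  | succ m ih =>
    have key : ((m + 1 : ℕ) : ℝ) * ∑ F ∈ E.powersetCard (m + 1), ∏ e ∈ F, z e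
        ≤ (∑ F ∈ E.powersetCard m, ∏ e ∈ F, z e) * ∑ e ∈ E, z e := by
      rw [succ_mul_sum_powersetCard_succ_prod, sum_mul]
      gcongr with F hF
      · exact prod_nonneg fun e he => hz0 e ((mem_powersetCard.mp hF).1 he)
      · exact fun e he _ => hz0 e he
      · exact sdiff_subset
    calc ((m + 1)! : ℝ) * ∑ F ∈ E.powersetCard (m + 1), ∏ e ∈ F, z e
        = m ! * (((m + 1 : ℕ) : ℝ) * ∑ F ∈ E.powersetCard (m + 1), ∏ e ∈ F, z e) := by
          rw [Nat.factorial_succ]; push_cast; ring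
      _ ≤ m ! * ((∑ F ∈ E.powersetCard m, ∏ e ∈ F, z e) * ∑ e ∈ E, z e) := by gcongr
      _ ≤ (∑ e ∈ E, z e) ^ m * ∑ e ∈ E, z e := by
          rw [← mul_assoc]
          exact mul_le_mul_of_nonneg_right ih (sum_nonneg hz0)
      _ = (∑ e ∈ E, z e) ^ (m + 1) := (pow_succ _ _).symm

theorem inv_two_pow_le_factorial_mul_sum_powersetCard_prod {m : ℕ}
    (hz0 : ∀ e ∈ E, 0 ≤ z e) (hz : ∀ e ∈ E, z e ≤ 1 / (2 * m)) (h1 : 1 ≤ ∑ e ∈ E, z e) :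
    (1 / 2 : ℝ) ^ m ≤ m ! * ∑ F ∈ E.powersetCard m, ∏ e ∈ F, z e := by
  have hstep : ∀ ℓ < m, ℓ * (1 / (2 * m) : ℝ) ≤ 1 / 2 := by
    intro ℓ hℓ
    have hm : (0 : ℝ) < m := by exact_mod_cast (Nat.zero_le ℓ).trans_lt hℓ
    have hℓm : (ℓ : ℝ) ≤ m := by exact_mod_cast hℓ.le
    rw [mul_one_div, div_le_div_iff₀ (by positivity) two_pos]
    linarith
  calc (1 / 2 : ℝ) ^ m = ∏ _ℓ ∈ range m, (1 / 2 : ℝ) := by simp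
    _ ≤ ∏ ℓ ∈ range m, (∑ e ∈ E, z e - ℓ * (1 / (2 * m))) :=
        prod_le_prod (fun _ _ => by norm_num) fun ℓ hℓ => by linarith [hstep ℓ (mem_range.mp hℓ)]
    _ ≤ m ! * ∑ F ∈ E.powersetCard m, ∏ e ∈ F, z e :=
        prod_range_sub_le_factorial_mul_sum_powersetCard_prod hz0 hz m fun ℓ hℓ => by
          linarith [hstep ℓ hℓ]

end ElementarySymmetric

variable {α : Type*} [DecidableEq α]

theorem sum_sum_powersetCard_filter_mem {M : Type*} [AddCommMonoid M] (E : Finset (Finset α))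
    (U : Finset α) (f : Finset (Finset α) → M) (m : ℕ) :
    ∑ v ∈ U, ∑ F ∈ {e ∈ E | v ∈ e}.powersetCard m, f F
      = ∑ F ∈ E.powersetCard m, #{v ∈ U | ∀ e ∈ F, v ∈ e} • f F := by
  simp_rw [← sum_const]
  refine sum_comm' fun v F => ?_
  simp only [mem_powersetCard, mem_filter, subset_iff]
  grind

theorem card_le_mul_two_mul_sum_pow {E : Finset (Finset α)} {U : Finset α}
    {z : Finset α → ℝ} {i j : ℕ} (hz0 : ∀ e ∈ E, 0 ≤ z e) (hz : ∀ e ∈ E, z e ≤ 1 / (2 * i))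
    (hU : ∀ v ∈ U, 1 ≤ ∑ e ∈ E with v ∈ e, z e)
    (hint : ∀ F ⊆ E, #F = i → #{v ∈ U | ∀ e ∈ F, v ∈ e} ≤ j) :
    (#U : ℝ) ≤ j * (2 * ∑ e ∈ E, z e) ^ i := by
  have hcount : (#U : ℝ) * (1 / 2) ^ i ≤ j * (∑ e ∈ E, z e) ^ i :=
    calc (#U : ℝ) * (1 / 2) ^ i = ∑ _v ∈ U, (1 / 2 : ℝ) ^ i := by rw [sum_const, nsmul_eq_mul]
      _ ≤ ∑ v ∈ U, i ! * ∑ F ∈ {e ∈ E | v ∈ e}.powersetCard i, ∏ e ∈ F, z e :=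
          sum_le_sum fun v hv => inv_two_pow_le_factorial_mul_sum_powersetCard_prod
            (fun e he => hz0 e (mem_filter.mp he).1) (fun e he => hz e (mem_filter.mp he).1)
            (hU v hv)
      _ = i ! * ∑ F ∈ E.powersetCard i, (#{v ∈ U | ∀ e ∈ F, v ∈ e} : ℝ) * ∏ e ∈ F, z e := by
          simp_rw [← mul_sum, sum_sum_powersetCard_filter_mem, nsmul_eq_mul]
      _ ≤ i ! * ∑ F ∈ E.powersetCard i, (j : ℝ) * ∏ e ∈ F, z e := by
          gcongr with F hF
          · obtain ⟨hFE, -⟩ := mem_powersetCard.mp hF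
            exact prod_nonneg fun e he => hz0 e (hFE he)
          · obtain ⟨hFE, hcard⟩ := mem_powersetCard.mp hF
            exact_mod_cast hint F hFE hcard
      _ = j * (i ! * ∑ F ∈ E.powersetCard i, ∏ e ∈ F, z e) := by rw [← mul_sum]; ring
      _ ≤ j * (∑ e ∈ E, z e) ^ i := by
          gcongr
          exact factorial_mul_sum_powersetCard_prod_le_pow hz0 i
  calc (#U : ℝ) = #U * (1 / 2) ^ i * 2 ^ i := by rw [mul_assoc, ← mul_pow]; norm_num
    _ ≤ j * (∑ e ∈ E, z e) ^ i * 2 ^ i := by gcongr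
    _ = j * (2 * ∑ e ∈ E, z e) ^ i := by ring

theorem exists_mem_card_le_mul_card_inter {E : Finset (Finset α)} {y : Finset α → ℝ}
    (hy0 : ∀ e ∈ E, 0 ≤ y e) {U : Finset α} (hU : U.Nonempty)
    (hcov : ∀ v ∈ U, 1 ≤ ∑ e ∈ E with v ∈ e, y e) :
    ∃ e ∈ E, (#U : ℝ) ≤ (∑ e ∈ E, y e) * #(U ∩ e) := by
  obtain ⟨v, hv⟩ := hU
  have hE : E.Nonempty := by
    rw [nonempty_iff_ne_empty]
    rintro rfl
    exact absurd (hcov v hv) (by norm_num)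
  obtain ⟨e₀, he₀, hmax⟩ := E.exists_max_image (fun e => #(U ∩ e)) hE
  refine ⟨e₀, he₀, ?_⟩
  calc (#U : ℝ) = ∑ _v ∈ U, (1 : ℝ) := by simp
    _ ≤ ∑ v ∈ U, ∑ e ∈ E with v ∈ e, y e := sum_le_sum hcov
    _ = ∑ e ∈ E, (#(U ∩ e) : ℝ) * y e := by
        simp_rw [sum_filter]
        rw [sum_comm]
        simp_rw [← sum_filter, sum_const, filter_mem_eq_inter, nsmul_eq_mul]
    _ ≤ ∑ e ∈ E, (#(U ∩ e₀) : ℝ) * y e :=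
        sum_le_sum fun e he => mul_le_mul_of_nonneg_right (by exact_mod_cast hmax e he) (hy0 e he)
    _ = (∑ e ∈ E, y e) * #(U ∩ e₀) := by rw [← mul_sum, mul_comm]

theorem exists_cover_card_le_mul_log_add_one {E : Finset (Finset α)} {y : Finset α → ℝ}
    {K : ℝ} (hy0 : ∀ e ∈ E, 0 ≤ y e) (hyK : ∑ e ∈ E, y e ≤ K) (U : Finset α)
    (hcov : ∀ v ∈ U, 1 ≤ ∑ e ∈ E with v ∈ e, y e) :
    ∃ F ⊆ E, U ⊆ F.biUnion id ∧ (#F : ℝ) ≤ K * Real.log #U + 1 := by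
  induction U using Finset.strongInduction with
  | H U ih =>
  rcases U.eq_empty_or_nonempty with rfl | hU
  · exact ⟨∅, empty_subset _, by simp, by simp⟩
  obtain ⟨e₀, he₀, hbig⟩ := exists_mem_card_le_mul_card_inter hy0 hU hcov
  have hUpos : (0 : ℝ) < #U := by exact_mod_cast hU.card_pos
  replace hbig : (#U : ℝ) ≤ K * #(U ∩ e₀) := hbig.trans (by gcongr)
  have hK : 0 < K := pos_of_mul_pos_left (hUpos.trans_le hbig) (Nat.cast_nonneg _)
  have hUe₀ : (U ∩ e₀).Nonempty := by
    rw [← card_pos, ← Nat.cast_pos (α := ℝ)]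
    exact pos_of_mul_pos_right (hUpos.trans_le hbig) hK.le
  rcases (U \ e₀).eq_empty_or_nonempty with hrest | hrest
  · refine ⟨{e₀}, singleton_subset_iff.mpr he₀,
      by simpa [sdiff_eq_empty_iff_subset] using hrest, ?_⟩
    have : 0 ≤ K * Real.log #U := mul_nonneg hK.le (Real.log_nonneg (by exact_mod_cast hU.card_pos))
    simpa using this
  have hssub : U \ e₀ ⊂ U := sdiff_inter_self_left U e₀ ▸ sdiff_ssubset inter_subset_left hUe₀
  obtain ⟨F, hFE, hUF, hFcard⟩ := ih _ hssub fun v hv => hcov v (mem_sdiff.mp hv).1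
  refine ⟨insert e₀ F, insert_subset he₀ hFE, fun v hv => ?_, ?_⟩
  · by_cases hve : v ∈ e₀
    · exact mem_biUnion.mpr ⟨e₀, mem_insert_self _ _, hve⟩
    · obtain ⟨e, he, hve⟩ := mem_biUnion.mp (hUF (mem_sdiff.mpr ⟨hv, hve⟩))
      exact mem_biUnion.mpr ⟨e, mem_insert_of_mem he, hve⟩
  have hshrink : (#(U \ e₀) : ℝ) ≤ #U * (1 - 1 / K) := by
    have hsplit : (#(U \ e₀) : ℝ) + #(U ∩ e₀) = #U := mod_cast card_sdiff_add_card_inter U e₀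
    have : (#U : ℝ) / K ≤ #(U ∩ e₀) := by rwa [div_le_iff₀ hK, mul_comm]
    linarith [mul_one_sub (#U : ℝ) (1 / K), mul_one_div (#U : ℝ) K]
  have hstep := Real.mul_log_add_one_le hK (by exact_mod_cast hrest.card_pos) hUpos.le hshrink
  calc (#(insert e₀ F) : ℝ) ≤ #F + 1 := by exact_mod_cast card_insert_le e₀ F
    _ ≤ K * Real.log #U + 1 := by linarith

theorem card_filter_le_le_sum_div {β : Type*} {E : Finset β} {y : β → ℝ} {θ : ℝ} (hθ : 0 < θ)
    (hy0 : ∀ e ∈ E, 0 ≤ y e) : (#{e ∈ E | θ ≤ y e} : ℝ) ≤ (∑ e ∈ E, y e) / θ := by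
  rw [le_div_iff₀ hθ, ← nsmul_eq_mul]
  exact (card_nsmul_le_sum _ y θ fun e he => (mem_filter.mp he).2).trans
    (sum_le_sum_of_subset_of_nonneg (filter_subset _ _) fun e he _ => hy0 e he)

theorem exists_cover_card_le_of_forall_card_filter_le {E : Finset (Finset α)} {V : Finset α}
    {y : Finset α → ℝ} {K : ℝ} {i j : ℕ} (hi : 0 < i) (hK : 1 ≤ K)
    (hy0 : ∀ e ∈ E, 0 ≤ y e) (hyK : ∑ e ∈ E, y e ≤ K)
    (hV : ∀ v ∈ V, 1 ≤ ∑ e ∈ E with v ∈ e, y e)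
    (hint : ∀ F ⊆ E, #F = i → #{v ∈ V | ∀ e ∈ F, v ∈ e} ≤ j) :
    ∃ F ⊆ E, V ⊆ F.biUnion id ∧
      (#F : ℝ) ≤ 2 * i * K + K * Real.log (j * (2 * K) ^ i) + 1 := by
  set θ : ℝ := 1 / (2 * i)
  set heavy := {e ∈ E | θ ≤ y e}
  have hheavy : (#heavy : ℝ) ≤ 2 * i * K := by
    have hi' : (0 : ℝ) < i := by exact_mod_cast hi
    calc (#heavy : ℝ) ≤ (∑ e ∈ E, y e) / θ := card_filter_le_le_sum_div (by positivity) hy0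
      _ ≤ 2 * i * K := by rw [div_le_iff₀ (by positivity)]; simp only [θ]; field_simp; linarith
  set U := V \ heavy.biUnion id
  set z : Finset α → ℝ := fun e => if θ ≤ y e then 0 else y e
  have hz0 : ∀ e ∈ E, 0 ≤ z e := fun e he => by unfold z; split_ifs <;> simp [hy0 e he]
  have hzθ : ∀ e ∈ E, z e ≤ θ := fun e he => by
    unfold z; split_ifs with h
    · positivity
    · exact (not_le.mp h).le
  have hzU : ∀ v ∈ U, 1 ≤ ∑ e ∈ E with v ∈ e, z e := by
    intro v hv
    obtain ⟨hvV, hvheavy⟩ := mem_sdiff.mp hv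
    refine (hV v hvV).trans_eq (sum_congr rfl fun e he => ?_)
    obtain ⟨heE, hve⟩ := mem_filter.mp he
    have hlight : ¬θ ≤ y e := fun h => hvheavy (mem_biUnion.mpr ⟨e, mem_filter.mpr ⟨heE, h⟩, hve⟩)
    simp [z, hlight]
  have hU : (#U : ℝ) ≤ j * (2 * K) ^ i := by
    refine (card_le_mul_two_mul_sum_pow (j := j) hz0 hzθ hzU fun F hFE hF => ?_).trans ?_
    · exact (card_le_card (filter_subset_filter _ sdiff_subset)).trans (hint F hFE hF)
    · have hzy : ∑ e ∈ E, z e ≤ ∑ e ∈ E, y e :=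
        sum_le_sum fun e he => by unfold z; split_ifs <;> simp [hy0 e he]
      gcongr
      exacts [mul_nonneg zero_le_two (sum_nonneg hz0), hzy.trans hyK]
  have hlogU : Real.log #U ≤ Real.log (j * (2 * K) ^ i) := by
    rcases (#U).eq_zero_or_pos with h | h
    · rw [h, Nat.cast_zero, Real.log_zero]
      rcases j.eq_zero_or_pos with hj | hj
      · simp [hj]
      · exact Real.log_nonneg (one_le_mul_of_one_le_of_one_le (by exact_mod_cast hj)
          (one_le_pow₀ (by linarith)))
    · exact Real.log_le_log (by exact_mod_cast h) hU
  obtain ⟨F, hFE, hUF, hFcard⟩ :=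
    exists_cover_card_le_mul_log_add_one hy0 hyK U fun v hv => hV v (mem_sdiff.mp hv).1
  refine ⟨heavy ∪ F, union_subset (filter_subset _ _) hFE, ?_, ?_⟩
  · rw [union_biUnion]
    exact sdiff_le_iff.mp hUF
  calc (#(heavy ∪ F) : ℝ) ≤ #heavy + #F := by exact_mod_cast card_union_le heavy F
    _ ≤ 2 * i * K + (K * Real.log #U + 1) := add_le_add hheavy hFcard
    _ ≤ 2 * i * K + K * Real.log (j * (2 * K) ^ i) + 1 := by
        have := mul_le_mul_of_nonneg_left hlogU (zero_le_one.trans hK)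
        linarith

end Finset

theorem Hypergraph'.exists_fracCover_sum_lt {α : Type*} [DecidableEq α] (H : Hypergraph' α)
    {c : ℝ} (hc : H.fracCoverSet H.V < c) :
    ∃ y : Finset α → ℝ, (∀ e, 0 ≤ y e) ∧ (∀ v ∈ H.V, 1 ≤ ∑ e ∈ H.E with v ∈ e, y e) ∧
      ∑ e ∈ H.E, y e < c := by
  have hones : ∀ v ∈ H.V, (if v ∈ H.V then (1 : ℝ) else 0) ≤ ∑ e ∈ H.E, if v ∈ e then 1 else 0 := by
    intro v hv
    obtain ⟨e, he, hve⟩ := H.no_isolated v hv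
    rw [if_pos hv, sum_boole, Nat.one_le_cast, one_le_card]
    exact ⟨e, mem_filter.mpr ⟨he, hve⟩⟩
  obtain ⟨_, ⟨y, hy01, hycov, rfl⟩, hlt⟩ :=
    exists_lt_of_csInf_lt (by exact ⟨_, fun _ => 1, fun _ => ⟨zero_le_one, le_rfl⟩, hones, rfl⟩) hc
  exact ⟨y, fun e => (hy01 e).1, fun v hv => by simpa [hv, sum_filter] using hycov v hv, hlt⟩

theorem two_mul_mul_add_mul_log_add_one_le {k : ℝ} (hk : 1 ≤ k) {i j : ℕ} (hi : 0 < i)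
    (hj : 0 < j) :
    2 * i * (k + 1) + (k + 1) * Real.log (j * (2 * (k + 1)) ^ i) + 1
      ≤ 10 * k * i * Real.logb 2 (2 * k * j) := by
  have hi1 : (1 : ℝ) ≤ i := by exact_mod_cast hi
  have hj1 : (1 : ℝ) ≤ j := by exact_mod_cast hj
  set L := Real.log (2 * k * j)
  have hL2 : Real.log 2 ≤ L := Real.log_le_log two_pos (by nlinarith)
  have hlogj : Real.log j ≤ L := Real.log_le_log (by linarith) (by nlinarith)
  have hlog2k : Real.log (2 * k) ≤ L := Real.log_le_log (by linarith) (by nlinarith)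
  have hlog2K : Real.log (2 * (k + 1)) ≤ 2 * L := by
    have h := Real.log_le_log (by linarith) (show 2 * (k + 1) ≤ (2 * k) * (2 * k) by nlinarith)
    rw [Real.log_mul (by positivity : 2 * k ≠ 0) (by positivity)] at h
    linarith
  have hlog : Real.log (j * (2 * (k + 1)) ^ i) ≤ L + 2 * i * L := by
    rw [Real.log_mul (by positivity) (by positivity), Real.log_pow]
    nlinarith
  have hlog_nonneg : 0 ≤ Real.log (j * (2 * (k + 1)) ^ i) :=
    Real.log_nonneg (one_le_mul_of_one_le_of_one_le hj1 (one_le_pow₀ (by linarith)))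
  have hL : 0 < L := (Real.log_pos one_lt_two).trans_le hL2
  -- since `log 2 ≤ L` and `log 2 < 0.7`
  have hnum : (5 + 6 * L) * Real.log 2 ≤ 10 * L := by nlinarith [Real.log_two_lt_d9]
  have hki : 1 ≤ k * i := by nlinarith
  calc 2 * i * (k + 1) + (k + 1) * Real.log (j * (2 * (k + 1)) ^ i) + 1
      ≤ 2 * i * (2 * k) + 2 * k * (L + 2 * i * L) + 1 := by gcongr <;> linarith
    _ ≤ k * i * (5 + 6 * L) := by
        nlinarith [mul_le_mul_of_nonneg_left hi1 (by positivity : 0 ≤ k * L)]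
    _ ≤ k * i * (10 * L / Real.log 2) := by
        gcongr
        rwa [le_div_iff₀ (Real.log_pos one_lt_two)]
    _ = 10 * k * i * Real.logb 2 (2 * k * j) := by rw [Real.logb]; ring

/-- Fractional versus integral edge covers under the `i-j` intersection
property: `ρ_H(V(H)) ≤ 10·k·i·log₂(2kj)`. -/
theorem int_cover_from_frac_cover {α : Type*} [DecidableEq α] (H : Hypergraph' α)
    (k : ℝ) (hk : 1 ≤ k) (i j : ℕ) (hi : 0 < i) (hj : 0 < j)
    (hcov : H.fracCoverSet H.V ≤ k)
    (hint : ∀ F ⊆ H.E, F.card = i →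
      (H.V.filter (fun v => ∀ e ∈ F, v ∈ e)).card ≤ j) :
    (H.intCover H.V : ℝ) ≤ 10 * k * (i : ℝ) * Real.logb 2 (2 * k * (j : ℝ)) := by
  obtain ⟨y, hy0, hyV, hyk⟩ := H.exists_fracCover_sum_lt (hcov.trans_lt (lt_add_one k))
  obtain ⟨F, hFE, hVF, hFcard⟩ := Finset.exists_cover_card_le_of_forall_card_filter_le hi
    (by linarith) (fun e _ => hy0 e) hyk.le hyV hint
  calc (H.intCover H.V : ℝ) ≤ F.card :=
        mod_cast (Nat.sInf_le ⟨F, hFE, hVF, rfl⟩ : H.intCover H.V ≤ F.card)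
    _ ≤ 10 * k * i * Real.logb 2 (2 * k * j) :=
        hFcard.trans (two_mul_mul_add_mul_log_add_one_le hk hi hj)
end
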